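/- arXiv:math/9909024 — 7 statements merged into one kernel-verified Lean document; each statement's English description precedes it below -/
import Mathlib

section
/- In an abelian category, given a commutative pushout square of chain complexes with top map f : A → B and bottom map g : C → D, if f is a monomorphism and a quasi-isomorphism, then g is also a monomorphism and a quasi-isomorphism. -/
open CategoryTheory CategoryTheory.Limits

/-- In an abelian category, given a commutative pushout square of chain complexes
with top map `f : A ⟶ B`, left map `r : A ⟶ C`, right map `s : B ⟶ D` and bottom
map `g : C ⟶ D`, if `f` is a monomorphism and a quasi-isomorphism, then so is `g`. -/
theorem pushout_mono_quasiIso {𝒜 : Type*} [Category 𝒜] [Abelian 𝒜]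
    {A B C D : ChainComplex 𝒜 ℤ} (f : A ⟶ B) (r : A ⟶ C) (s : B ⟶ D) (g : C ⟶ D)
    (hsq : IsPushout f r s g) [Mono f] [QuasiIso f] :
    Mono g ∧ QuasiIso g := by
  -- `g` is a mono because pushouts of monos are monos in an abelian category
  have hmono : Mono g := by
    rw [← hsq.inr_isoPushout_inv]
    infer_instance
  refine ⟨hmono, ?_⟩
  -- the canonical map `D ⟶ cokernel f`
  let φ : D ⟶ cokernel f := hsq.desc (cokernel.π f) 0 (by simp)
  have hsφ : s ≫ φ = cokernel.π f := hsq.inl_desc _ _ _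
  have hgφ : g ≫ φ = 0 := hsq.inr_desc _ _ _
  have hφepi : Epi φ := by
    have : Epi (s ≫ φ) := by rw [hsφ]; infer_instance
    exact epi_of_epi s φ
  -- `φ` is a cokernel of `g`
  have hcolim : IsColimit (CokernelCofork.ofπ φ hgφ) := by
    refine CokernelCofork.IsColimit.ofπ' φ hgφ (fun {T} k hk => ?_)
    refine ⟨cokernel.desc f (s ≫ k) ?_, ?_⟩
    · rw [← Category.assoc, hsq.w, Category.assoc, hk, comp_zero]
    · apply hsq.hom_ext
      · rw [← Category.assoc, hsφ, cokernel.π_desc]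
      · rw [← Category.assoc, hgφ, zero_comp, hk]
  -- the two short exact sequences
  let S₁ : ShortComplex (HomologicalComplex 𝒜 (ComplexShape.down ℤ)) :=
    ShortComplex.mk f (cokernel.π f) (cokernel.condition f)
  have hS₁ : S₁.ShortExact :=
    { exact := S₁.exact_of_g_is_cokernel (cokernelIsCokernel f)
      mono_f := ‹Mono f›
      epi_g := by dsimp [S₁]; infer_instance }
  let S₂ : ShortComplex (HomologicalComplex 𝒜 (ComplexShape.down ℤ)) :=
    ShortComplex.mk g φ hgφ
  have hS₂ : S₂.ShortExact :=
    { exact := S₂.exact_of_g_is_cokernel hcolim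
      mono_f := hmono
      epi_g := hφepi }
  -- `cokernel f` is acyclic
  have hQ : ∀ i : ℤ, IsZero ((cokernel f).homology i) := by
    intro i
    have hij : (ComplexShape.down ℤ).Rel i (i - 1) := by simp
    have e3 := hS₁.homology_exact₃ i (i - 1) hij
    have h1 : IsIso (HomologicalComplex.homologyMap f i) := by
      rw [← quasiIsoAt_iff_isIso_homologyMap]; infer_instance
    have h2 : IsIso (HomologicalComplex.homologyMap f (i - 1)) := by
      rw [← quasiIsoAt_iff_isIso_homologyMap]; infer_instance
    apply e3.isZero_X₂
    · dsimp
      rw [← cancel_epi (HomologicalComplex.homologyMap f i), comp_zero,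
        ← HomologicalComplex.homologyMap_comp, cokernel.condition,
        HomologicalComplex.homologyMap_zero]
    · rw [← cancel_mono (HomologicalComplex.homologyMap f (i - 1)), zero_comp]
      exact hS₁.δ_comp i (i - 1) hij
  -- conclude using the long exact sequence of `S₂`
  rw [quasiIso_iff]
  intro i
  rw [quasiIsoAt_iff_isIso_homologyMap]
  have hij : (ComplexShape.down ℤ).Rel (i + 1) i := by simp
  have hm : Mono (HomologicalComplex.homologyMap g i) :=
    (hS₂.homology_exact₁ (i + 1) i hij).mono_g ((hQ (i + 1)).eq_zero_of_src _)
  have he : Epi (HomologicalComplex.homologyMap g i) :=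
    (hS₂.homology_exact₂ i).epi_f ((hQ i).eq_zero_of_tgt _)
  exact isIso_of_mono_of_epi _
end

section
/- In an abelian category, given a commutative pushout square of chain complexes with top map f : A → B, left map r : A → C, and bottom map g : C → D, if r is a monomorphism and f is a quasi-isomorphism, then g is a quasi-isomorphism. -/
open CategoryTheory CategoryTheory.Limits

section Aux

variable {𝒜 : Type*} [Category 𝒜] [Abelian 𝒜]

lemma aux_quasiIso_biprodMap {A B : ChainComplex 𝒜 ℤ} (f : A ⟶ B) (C : ChainComplex 𝒜 ℤ)
    [QuasiIso f] : QuasiIso (biprod.map f (𝟙 C)) := by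
  rw [quasiIso_iff]
  intro i
  rw [quasiIsoAt_iff_isIso_homologyMap]
  let F := HomologicalComplex.homologyFunctor 𝒜 (ComplexShape.down ℤ) i
  haveI : PreservesBinaryBiproducts F :=
    preservesBinaryBiproducts_of_preservesBiproducts F
  have hf : IsIso (F.map f) := by
    have : IsIso (HomologicalComplex.homologyMap f i) := inferInstance
    exact this
  have key : F.map (biprod.map f (𝟙 C)) ≫ (F.mapBiprod B C).hom =
      (F.mapBiprod A C).hom ≫ biprod.map (F.map f) (𝟙 (F.obj C)) := by
    apply biprod.hom_ext
    · simp only [Category.assoc, Functor.mapBiprod_hom, biprod.lift_fst, biprod.map_fst,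
        biprod.map_fst_assoc, ← F.map_comp, F.map_id, Category.comp_id]
      rw [biprod.lift_fst_assoc, ← F.map_comp]
    · simp only [Category.assoc, Functor.mapBiprod_hom, biprod.lift_snd, biprod.map_snd,
        biprod.map_snd_assoc, ← F.map_comp, F.map_id, Category.comp_id]
  have : IsIso (biprod.map (F.map f) (𝟙 (F.obj C))) := by
    have heq : biprod.map (F.map f) (𝟙 (F.obj C)) =
        (biprod.mapIso (asIso (F.map f)) (Iso.refl (F.obj C))).hom := rfl
    rw [heq]
    infer_instance
  have : IsIso (F.map (biprod.map f (𝟙 C)) ≫ (F.mapBiprod B C).hom) := by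
    rw [key]
    infer_instance
  show IsIso (F.map (biprod.map f (𝟙 C)))
  exact IsIso.of_isIso_comp_right _ (F.mapBiprod B C).hom

end Aux

/-- In an abelian category, given a pushout square of chain complexes with top map
`f : A ⟶ B`, left map `r : A ⟶ C` and bottom map `g : C ⟶ D`, if `r` is a monomorphism
and `f` is a quasi-isomorphism, then `g` is a quasi-isomorphism. -/
theorem pushout_quasiIso_of_mono {𝒜 : Type*} [Category 𝒜] [Abelian 𝒜]
    {A B C D : ChainComplex 𝒜 ℤ} (f : A ⟶ B) (r : A ⟶ C) (s : B ⟶ D) (g : C ⟶ D)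
    (hsq : IsPushout f r s g) [Mono r] [QuasiIso f] :
    QuasiIso g := by
  have hw : f ≫ s = r ≫ g := hsq.w
  -- The two short complexes
  have hz₂ : biprod.lift f (-r) ≫ biprod.desc s g = 0 := by
    simp [hw]
  have hz₁ : biprod.lift (𝟙 A) (-r) ≫ biprod.desc r (𝟙 C) = 0 := by
    simp
  let S₁ : ShortComplex (ChainComplex 𝒜 ℤ) := ShortComplex.mk _ _ hz₁
  let S₂ : ShortComplex (ChainComplex 𝒜 ℤ) := ShortComplex.mk _ _ hz₂
  -- Monomorphisms
  have hmono₂ : Mono S₂.f := by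
    have h1 : Mono (r ≫ (-𝟙 C)) := mono_comp _ _
    have h2 : biprod.lift f (-r) ≫ biprod.snd = r ≫ (-𝟙 C) := by simp
    exact mono_of_mono_fac h2
  have hmono₁ : Mono S₁.f := by
    have h1 : Mono (r ≫ (-𝟙 C)) := mono_comp _ _
    have h2 : biprod.lift (𝟙 A) (-r) ≫ biprod.snd = r ≫ (-𝟙 C) := by simp
    exact mono_of_mono_fac h2
  -- Colimit cokernel coforks from the pushout squares
  have sq₁ : IsPushout (𝟙 A) r r (𝟙 C) :=
    IsPushout.of_horiz_isIso ⟨by simp⟩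
  have colim₁ : IsColimit (CokernelCofork.ofπ S₁.g S₁.zero) := sq₁.isColimitCokernelCofork
  have colim₂ : IsColimit (CokernelCofork.ofπ S₂.g S₂.zero) := hsq.isColimitCokernelCofork
  have hS₁ : S₁.ShortExact :=
    ShortComplex.ShortExact.mk' (S₁.exact_of_g_is_cokernel colim₁) hmono₁
      (epi_of_isColimit_cofork colim₁)
  have hS₂ : S₂.ShortExact :=
    ShortComplex.ShortExact.mk' (S₂.exact_of_g_is_cokernel colim₂) hmono₂
      (epi_of_isColimit_cofork colim₂)
  -- The morphism of short complexes
  let φ : S₁ ⟶ S₂ :=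
    { τ₁ := 𝟙 A
      τ₂ := biprod.map f (𝟙 C)
      τ₃ := g
      comm₁₂ := by apply biprod.hom_ext <;> simp [S₁, S₂]
      comm₂₃ := by apply biprod.hom_ext' <;> simp [S₁, S₂, hw] }
  have h₁ : QuasiIso φ.τ₁ := by
    show QuasiIso (𝟙 A)
    infer_instance
  have h₂ : QuasiIso φ.τ₂ := aux_quasiIso_biprodMap f C
  exact HomologicalComplex.HomologySequence.quasiIso_τ₃ φ hS₁ hS₂ h₁ h₂
end

section
/- In an abelian category, given a commutative pullback square of chain complexes with bottom map g : C → D and top map f : A → B, if g is an epimorphism and a quasi-isomorphism, then f is an epimorphism and a quasi-isomorphism. -/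
open CategoryTheory CategoryTheory.Limits HomologicalComplex

/-- If `S` is a short exact sequence of chain complexes whose first term is acyclic,
then `S.g` is a quasi-isomorphism. -/
lemma aux_quasiIso_g_of_acyclic {𝒜 : Type*} [Category 𝒜] [Abelian 𝒜]
    (S : ShortComplex (ChainComplex 𝒜 ℤ)) (hS : S.ShortExact)
    (h : ∀ n, IsZero (S.X₁.homology n)) : QuasiIso S.g := by
  rw [quasiIso_iff]
  intro i
  rw [quasiIsoAt_iff_isIso_homologyMap]
  have hrel : (ComplexShape.down ℤ).Rel i (i - 1) := by simp
  have hmono : Mono (homologyMap S.g i) :=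
    (hS.homology_exact₂ i).mono_g ((h i).eq_of_src _ _)
  have hepi : Epi (homologyMap S.g i) :=
    (hS.homology_exact₃ i (i - 1) hrel).epi_f ((h (i - 1)).eq_of_tgt _ _)
  exact isIso_of_mono_of_epi _

/-- If `S` is a short exact sequence of chain complexes with `S.g` a quasi-isomorphism,
then the first term is acyclic. -/
lemma aux_acyclic_of_quasiIso_g {𝒜 : Type*} [Category 𝒜] [Abelian 𝒜]
    (S : ShortComplex (ChainComplex 𝒜 ℤ)) (hS : S.ShortExact) [QuasiIso S.g]
    (n : ℤ) : IsZero (S.X₁.homology n) := by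
  have hrel : (ComplexShape.down ℤ).Rel (n + 1) n := by simp
  have hiso1 : IsIso (homologyMap S.g (n + 1)) := by
    rw [← quasiIsoAt_iff_isIso_homologyMap]; infer_instance
  have hiso2 : IsIso (homologyMap S.g n) := by
    rw [← quasiIsoAt_iff_isIso_homologyMap]; infer_instance
  -- the connecting map `δ` vanishes
  have hδ : hS.δ (n + 1) n hrel = 0 := by
    rw [← cancel_epi (homologyMap S.g (n + 1)), hS.comp_δ, comp_zero]
  -- hence the map induced by `S.f` in degree `n` is mono
  have hmono : Mono (homologyMap S.f n) :=
    (hS.homology_exact₁ (n + 1) n hrel).mono_g hδ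
  -- and it is also zero since `homologyMap S.g n` is mono
  have hzero : homologyMap S.f n = 0 := by
    rw [← cancel_mono (homologyMap S.g n), zero_comp, ← homologyMap_comp,
      S.zero, homologyMap_zero]
  rw [IsZero.iff_id_eq_zero, ← cancel_mono (homologyMap S.f n), hzero, Category.id_comp, zero_comp]

/-- In an abelian category, given a pullback square of chain complexes with top map
`f : A ⟶ B`, left map `r : A ⟶ C`, right map `s : B ⟶ D` and bottom map `g : C ⟶ D`,
if `g` is an epimorphism and a quasi-isomorphism, then so is `f`. -/
theorem pullback_epi_quasiIso {𝒜 : Type*} [Category 𝒜] [Abelian 𝒜]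
    {A B C D : ChainComplex 𝒜 ℤ} (f : A ⟶ B) (r : A ⟶ C) (s : B ⟶ D) (g : C ⟶ D)
    (hsq : IsPullback f r s g) [Epi g] [QuasiIso g] :
    Epi f ∧ QuasiIso f := by
  -- `f` is an epimorphism as a pullback of the epimorphism `g`
  have hepi : Epi f := by
    have := CategoryTheory.Abelian.epi_fst_of_isLimit s g hsq.isLimit
    exact this
  refine ⟨hepi, ?_⟩
  -- the short exact sequences of the kernels of `f` and `g`
  let Sf : ShortComplex (ChainComplex 𝒜 ℤ) :=
    ShortComplex.mk (kernel.ι f) f (kernel.condition f)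
  let Sg : ShortComplex (ChainComplex 𝒜 ℤ) :=
    ShortComplex.mk (kernel.ι g) g (kernel.condition g)
  have hSf : Sf.ShortExact :=
    { exact := Sf.exact_of_f_is_kernel (kernelIsKernel f) }
  have hSg : Sg.ShortExact :=
    { exact := Sg.exact_of_f_is_kernel (kernelIsKernel g) }
  -- the kernels of `f` and `g` are isomorphic, via the map induced by `r`
  have hcomp : (kernel.ι f ≫ r) ≫ g = 0 := by
    rw [Category.assoc, ← hsq.w, ← Category.assoc, kernel.condition, zero_comp]
  let u : kernel f ⟶ kernel g := kernel.lift g (kernel.ι f ≫ r) hcomp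
  let v : kernel g ⟶ kernel f :=
    kernel.lift f (hsq.lift (0 : kernel g ⟶ B) (kernel.ι g) (by simp))
      (hsq.lift_fst _ _ _)
  have huv : u ≫ v = 𝟙 (kernel f) := by
    rw [← cancel_mono (kernel.ι f)]
    simp only [Category.assoc, kernel.lift_ι, Category.id_comp, u, v]
    apply hsq.hom_ext
    · rw [Category.assoc, hsq.lift_fst, kernel.condition, comp_zero]
    · rw [Category.assoc, hsq.lift_snd, kernel.lift_ι]
  have hvu : v ≫ u = 𝟙 (kernel g) := by
    rw [← cancel_mono (kernel.ι g)]
    simp only [Category.assoc, kernel.lift_ι, Category.id_comp, u, v]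
    rw [← Category.assoc, kernel.lift_ι, hsq.lift_snd]
  let e : kernel f ≅ kernel g := ⟨u, v, huv, hvu⟩
  -- the kernel of `g` is acyclic since `g` is an epi quasi-isomorphism
  have hg : ∀ n, IsZero ((kernel g).homology n) :=
    aux_acyclic_of_quasiIso_g Sg hSg
  -- hence so is the kernel of `f`
  have hf : ∀ n, IsZero ((kernel f).homology n) := fun n =>
    (hg n).of_iso ((homologyFunctor _ _ n).mapIso e)
  exact aux_quasiIso_g_of_acyclic Sf hSf hf
end

section
/- In an abelian category, given a pullback square of chain complexes with right map s : B → D an epimorphism and bottom map g : C → D a quasi-isomorphism, the top map f : A → B is a quasi-isomorphism. -/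
open CategoryTheory CategoryTheory.Limits

section FiveLemma

open ComposableArrows HomologicalComplex HomologicalComplex.HomologySequence

variable {𝒜 : Type*} [Category 𝒜] [Abelian 𝒜]

private lemma rel_succ (i : ℤ) : (ComplexShape.down ℤ).Rel (i + 1) i := by simp
private lemma rel_pred (i : ℤ) : (ComplexShape.down ℤ).Rel i (i - 1) := by simp

/-- The five-term exact sequence `H_{i+1}(X₃) → H_i(X₁) → H_i(X₂) → H_i(X₃) → H_{i-1}(X₁)`. -/
private noncomputable def fiveSeq {S : ShortComplex (ChainComplex 𝒜 ℤ)}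
    (hS : S.ShortExact) (i : ℤ) : ComposableArrows 𝒜 4 :=
  mk₄ (hS.δ (i + 1) i (rel_succ i)) (homologyMap S.f i) (homologyMap S.g i)
    (hS.δ i (i - 1) (rel_pred i))

private lemma fiveSeq_exact {S : ShortComplex (ChainComplex 𝒜 ℤ)}
    (hS : S.ShortExact) (i : ℤ) : (fiveSeq hS i).Exact :=
  exact_of_δ₀ (hS.homology_exact₁ (i + 1) i (rel_succ i)).exact_toComposableArrows
    (exact_of_δ₀ (hS.homology_exact₂ i).exact_toComposableArrows
      (hS.homology_exact₃ i (i - 1) (rel_pred i)).exact_toComposableArrows)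

/-- The morphism of five-term exact sequences induced by a morphism of short exact
sequences of chain complexes. -/
private noncomputable def mapFiveSeq {S₁ S₂ : ShortComplex (ChainComplex 𝒜 ℤ)} (φ : S₁ ⟶ S₂)
    (hS₁ : S₁.ShortExact) (hS₂ : S₂.ShortExact) (i : ℤ) :
    fiveSeq hS₁ i ⟶ fiveSeq hS₂ i :=
  homMk₄ (homologyMap φ.τ₃ (i + 1)) (homologyMap φ.τ₁ i) (homologyMap φ.τ₂ i)
    (homologyMap φ.τ₃ i) (homologyMap φ.τ₁ (i - 1))
    (δ_naturality φ hS₁ hS₂ (i + 1) i (rel_succ i))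
    (by change homologyMap S₁.f i ≫ homologyMap φ.τ₂ i = homologyMap φ.τ₁ i ≫ homologyMap S₂.f i
        simp only [← homologyMap_comp, φ.comm₁₂])
    (by change homologyMap S₁.g i ≫ homologyMap φ.τ₃ i = homologyMap φ.τ₂ i ≫ homologyMap S₂.g i
        simp only [← homologyMap_comp, φ.comm₂₃])
    (δ_naturality φ hS₁ hS₂ i (i - 1) (rel_pred i))

/-- Five lemma for quasi-isomorphisms: the middle map of a morphism of short exact
sequences of chain complexes is a quasi-isomorphism if the two outer maps are. -/
private lemma quasiIso_τ₂ {S₁ S₂ : ShortComplex (ChainComplex 𝒜 ℤ)} (φ : S₁ ⟶ S₂)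
    (hS₁ : S₁.ShortExact) (hS₂ : S₂.ShortExact)
    (h₁ : QuasiIso φ.τ₁) (h₃ : QuasiIso φ.τ₃) : QuasiIso φ.τ₂ := by
  rw [quasiIso_iff]
  intro i
  rw [quasiIsoAt_iff_isIso_homologyMap]
  have e1 : IsIso (homologyMap φ.τ₃ (i + 1)) := by
    rw [← quasiIsoAt_iff_isIso_homologyMap]; infer_instance
  have e2 : IsIso (homologyMap φ.τ₁ i) := by
    rw [← quasiIsoAt_iff_isIso_homologyMap]; infer_instance
  have e3 : IsIso (homologyMap φ.τ₃ i) := by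
    rw [← quasiIsoAt_iff_isIso_homologyMap]; infer_instance
  have e4 : IsIso (homologyMap φ.τ₁ (i - 1)) := by
    rw [← quasiIsoAt_iff_isIso_homologyMap]; infer_instance
  have := Abelian.isIso_of_epi_of_isIso_of_isIso_of_mono
    (fiveSeq_exact hS₁ i) (fiveSeq_exact hS₂ i) (mapFiveSeq φ hS₁ hS₂ i)
    (show Epi (homologyMap φ.τ₃ (i + 1)) from inferInstance)
    (show IsIso (homologyMap φ.τ₁ i) from inferInstance)
    (show IsIso (homologyMap φ.τ₃ i) from inferInstance)
    (show Mono (homologyMap φ.τ₁ (i - 1)) from inferInstance)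
  dsimp [mapFiveSeq] at this
  exact this

end FiveLemma

/-- In an abelian category, given a pullback square of chain complexes with top map
`f : A ⟶ B`, left map `r : A ⟶ C`, right map `s : B ⟶ D` and bottom map `g : C ⟶ D`,
if `s` is an epimorphism and `g` is a quasi-isomorphism, then `f` is a quasi-isomorphism. -/
theorem pullback_quasiIso_of_epi {𝒜 : Type*} [Category 𝒜] [Abelian 𝒜]
    {A B C D : ChainComplex 𝒜 ℤ} (f : A ⟶ B) (r : A ⟶ C) (s : B ⟶ D) (g : C ⟶ D)
    (hsq : IsPullback f r s g) [Epi s] [QuasiIso g] :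
    QuasiIso f := by
  -- `r` is an epimorphism as a pullback of the epimorphism `s`
  have hepi : Epi r := CategoryTheory.Abelian.epi_snd_of_isLimit s g hsq.isLimit
  -- the map from `ker s` to `A`
  let k : kernel s ⟶ A := hsq.lift (kernel.ι s) 0 (by simp)
  have hkf : k ≫ f = kernel.ι s := hsq.lift_fst _ _ _
  have hkr : k ≫ r = 0 := hsq.lift_snd _ _ _
  have hmono : Mono k := mono_of_mono_fac hkf
  -- `k` is a kernel of `r`
  let hker : IsLimit (KernelFork.ofι k hkr) :=
    KernelFork.IsLimit.ofι' k hkr (fun {T} x hx =>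
      ⟨kernel.lift s (x ≫ f)
        (by rw [Category.assoc, hsq.w, ← Category.assoc, hx, zero_comp]), by
        apply hsq.hom_ext
        · rw [Category.assoc, hkf, kernel.lift_ι]
        · rw [Category.assoc, hkr, comp_zero, hx]⟩)
  -- the two short exact sequences
  let S₁ : ShortComplex (ChainComplex 𝒜 ℤ) := ShortComplex.mk k r hkr
  let S₂ : ShortComplex (ChainComplex 𝒜 ℤ) := ShortComplex.mk (kernel.ι s) s (kernel.condition s)
  have hS₁ : S₁.ShortExact :=
    { exact := ShortComplex.exact_of_f_is_kernel _ hker }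
  have hS₂ : S₂.ShortExact :=
    { exact := ShortComplex.exact_of_f_is_kernel _ (kernelIsKernel s) }
  -- the morphism of short exact sequences
  let φ : S₁ ⟶ S₂ :=
    { τ₁ := 𝟙 _
      τ₂ := f
      τ₃ := g
      comm₁₂ := by simpa using hkf.symm
      comm₂₃ := hsq.w }
  exact quasiIso_τ₂ φ hS₁ hS₂ (by dsimp [φ]; infer_instance) (by dsimp [φ]; infer_instance)
end

section
/- Let A be an abelian category with enough injectives, let i : A → B be a chain map of unbounded complexes with nonzero kernel. Then i does not have the left lifting property with respect to the class of epimorphisms of complexes with injective kernel. Consequently, every chain map having the left lifting property with respect to all epimorphisms with injective kernel is a monomorphism. -/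
open CategoryTheory CategoryTheory.Limits ZeroObject

namespace NotLLPAux

variable {𝒜 : Type*} [Category 𝒜] [Abelian 𝒜]

/-- The "disk" complex with `I` in degrees `n+1` and `n`, identity differential. -/
noncomputable def disk (I : 𝒜) (n : ℤ) : ChainComplex 𝒜 ℤ where
  X m := if m = n + 1 ∨ m = n then I else 0
  d j k :=
    if h : j = n + 1 ∧ k = n then
      eqToHom (if_pos (Or.inl h.1)) ≫ eqToHom (if_pos (Or.inr h.2)).symm
    else 0
  shape j k hjk := by
    rw [dif_neg]
    rintro ⟨h1, h2⟩
    exact hjk (by simp only [ComplexShape.down_Rel]; omega)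
  d_comp_d' j k l _ _ := by
    by_cases h : k = n + 1 ∧ l = n
    · rw [dif_neg (by rintro ⟨h1, h2⟩; omega), zero_comp]
    · rw [dif_neg h, comp_zero]

/-- The chain map into the disk determined by a map `C.X n ⟶ I`. -/
noncomputable def toDisk (C : ChainComplex 𝒜 ℤ) (I : 𝒜) (n : ℤ) (g : C.X n ⟶ I) :
    C ⟶ disk I n where
  f m :=
    if h : m = n then
      eqToHom (congrArg C.X h) ≫ g ≫ eqToHom (if_pos (Or.inr h)).symm
    else if h' : m = n + 1 then
      C.d m n ≫ g ≫ eqToHom (if_pos (Or.inl h')).symm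
    else 0
  comm' j k hjk := by
    obtain rfl : j = k + 1 := by simpa [ComplexShape.down_Rel] using hjk.symm
    by_cases hk : k = n
    · subst hk
      rw [show (disk I k).d (k + 1) k =
          eqToHom (if_pos (Or.inl rfl)) ≫ eqToHom (if_pos (Or.inr rfl)).symm from
          dif_pos ⟨rfl, rfl⟩,
        dif_neg (show ¬ (k + 1 : ℤ) = k by omega), dif_pos rfl, dif_pos rfl]
      simp; erw [Category.assoc, Category.assoc, eqToHom_trans]
    · rw [show (disk I n).d (k + 1) k = 0 from dif_neg (fun h => hk h.2), comp_zero]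
      by_cases hk' : k = n + 1
      · subst hk'
        rw [dif_neg hk, dif_pos rfl]
        simp
      · rw [dif_neg hk, dif_neg hk', comp_zero]

lemma comp_toDisk {X Y : ChainComplex 𝒜 ℤ} (φ : X ⟶ Y) (I : 𝒜) (n : ℤ)
    (g : Y.X n ⟶ I) : φ ≫ toDisk Y I n g = toDisk X I n (φ.f n ≫ g) := by
  ext m
  dsimp [toDisk]
  by_cases h : m = n
  · subst h; simp
  · by_cases h' : m = n + 1
    · subst h'
      rw [dif_neg h, dif_neg h, dif_pos rfl, dif_pos rfl]
      simp only [← Category.assoc]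
      congr 2
      exact φ.comm (n + 1) n
    · rw [dif_neg h, dif_neg h, dif_neg h', dif_neg h', comp_zero]

lemma eq_toDisk {C : ChainComplex 𝒜 ℤ} {I : 𝒜} {n : ℤ} (φ : C ⟶ disk I n) :
    φ = toDisk C I n (φ.f n ≫ eqToHom (if_pos (Or.inr rfl))) := by
  ext m
  dsimp [toDisk]
  by_cases h : m = n
  · subst h; simp; erw [eqToHom_trans, eqToHom_refl, Category.comp_id]
  · by_cases h' : m = n + 1
    · subst h'
      rw [dif_neg h, dif_pos rfl]
      have hc := φ.comm (n + 1) n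
      dsimp [disk] at hc
      rw [dif_pos ⟨rfl, rfl⟩] at hc
      simp only [← Category.assoc] at hc ⊢
      erw [← hc]
      simp [eqToHom_trans]; erw [Category.assoc, Category.assoc, eqToHom_trans, eqToHom_trans,
        eqToHom_refl, Category.comp_id]
    · rw [dif_neg h, dif_neg h']
      have hz : IsZero ((disk I n).X m) := by
        dsimp [disk]
        rw [if_neg (by omega)]
        exact isZero_zero 𝒜
      exact hz.eq_of_tgt _ _

instance disk_injective (I : 𝒜) [Injective I] (n : ℤ) : Injective (disk I n) where
  factors {X Y} φ m hm := by
    obtain ⟨g', hg'⟩ :=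
      Injective.factors (φ.f n ≫ eqToHom (if_pos (Or.inr rfl)) : X.X n ⟶ I) (m.f n)
    refine ⟨toDisk Y I n g', ?_⟩
    rw [comp_toDisk, hg', ← eq_toDisk]

theorem mono_of_llp [EnoughInjectives 𝒜] {A' B' : ChainComplex 𝒜 ℤ} (j : A' ⟶ B')
    (H : ∀ ⦃X Y : ChainComplex 𝒜 ℤ⦄ (p : X ⟶ Y), Epi p → Injective (kernel p) →
      HasLiftingProperty j p) : Mono j := by
  apply HomologicalComplex.mono_of_mono_f
  intro n
  obtain ⟨f, hf⟩ := Injective.factors (Injective.ι (kernel (j.f n))) (kernel.ι (j.f n))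
  let I : 𝒜 := Injective.under (kernel (j.f n))
  let p : disk I n ⟶ 0 := 0
  have hep : Epi p := ⟨fun a b _ => (isZero_zero _).eq_of_src a b⟩
  have hinj : Injective (kernel p) :=
    Injective.of_iso (kernelZeroIsoSource (X := disk I n)
      (Y := (0 : ChainComplex 𝒜 ℤ))).symm (disk_injective I n)
  have hlp := H p hep hinj
  have sq : CommSq (toDisk A' I n f) j p 0 := ⟨(isZero_zero _).eq_of_tgt _ _⟩
  have hl : j ≫ sq.lift = toDisk A' I n f := sq.fac_left
  have h1 : j.f n ≫ sq.lift.f n ≫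
      (eqToHom (if_pos (Or.inr rfl)) : (disk I n).X n ⟶ I) = f := by
    have h0 := HomologicalComplex.congr_hom hl n
    dsimp [toDisk] at h0
    rw [dif_pos rfl] at h0
    rw [← Category.assoc]; erw [h0]
    simp only [Category.id_comp, Category.assoc]; erw [eqToHom_trans, eqToHom_refl, Category.comp_id]
  have h3 : Injective.ι (kernel (j.f n)) = 0 := by
    rw [← hf, ← h1, ← Category.assoc, kernel.condition, zero_comp]
  have hK : IsZero (kernel (j.f n)) := by
    rw [IsZero.iff_id_eq_zero, ← cancel_mono (Injective.ι (kernel (j.f n)))]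
    simp [h3]
  exact Preadditive.mono_of_isZero_kernel _ hK

end NotLLPAux

open NotLLPAux in
/-- Let `𝒜` be an abelian category with enough injectives and `i : A ⟶ B` a chain map
with nonzero kernel.  Then `i` does not have the left lifting property with respect to
all epimorphisms of complexes with injective kernel.  Consequently, any chain map having
the left lifting property with respect to all epimorphisms with injective kernel is a
monomorphism. -/
theorem not_llp_of_kernel_ne_zero {𝒜 : Type*} [Category 𝒜] [Abelian 𝒜]
    [EnoughInjectives 𝒜] {A B : ChainComplex 𝒜 ℤ} (i : A ⟶ B)
    (hk : ¬ IsZero (kernel i)) :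
    (¬ ∀ ⦃X Y : ChainComplex 𝒜 ℤ⦄ (p : X ⟶ Y), Epi p → Injective (kernel p) →
        HasLiftingProperty i p) ∧
    (∀ {A' B' : ChainComplex 𝒜 ℤ} (j : A' ⟶ B'),
      (∀ ⦃X Y : ChainComplex 𝒜 ℤ⦄ (p : X ⟶ Y), Epi p → Injective (kernel p) →
        HasLiftingProperty j p) → Mono j) := by
  refine ⟨fun H => ?_, fun j hj => mono_of_llp j hj⟩
  have : Mono i := mono_of_llp i H
  exact hk (IsZero.of_iso (isZero_zero _) (kernel.ofMono i))
end

section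
/- Let A be an abelian category and p : X → Y a chain map in Ch(A) that has the right lifting property with respect to all monomorphisms. Then p is a degreewise split epimorphism and ker p is an injective object of Ch(A). -/
open CategoryTheory CategoryTheory.Limits ZeroObject

/-- Let `𝒜` be an abelian category and `p : X ⟶ Y` a chain map having the right lifting
property with respect to all monomorphisms of chain complexes.  Then `p` is a degreewise
split epimorphism and its kernel is an injective object of the category of complexes. -/
theorem rlp_mono_split_epi_injective_kernel {𝒜 : Type*} [Category 𝒜] [Abelian 𝒜]
    {X Y : ChainComplex 𝒜 ℤ} (p : X ⟶ Y)
    (h : ∀ ⦃A B : ChainComplex 𝒜 ℤ⦄ (i : A ⟶ B), Mono i → HasLiftingProperty i p) :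
    (∀ n : ℤ, IsSplitEpi (p.f n)) ∧ Injective (kernel p) := by
  -- First: p itself is a split epi, using the lifting property against 0 ⟶ Y.
  have hzero : Mono (0 : (0 : ChainComplex 𝒜 ℤ) ⟶ Y) := by
    constructor
    intro Z g g' _
    apply (isZero_zero _).eq_of_tgt
  haveI := h (0 : (0 : ChainComplex 𝒜 ℤ) ⟶ Y) hzero
  have sq : CommSq (0 : (0 : ChainComplex 𝒜 ℤ) ⟶ X) (0 : (0 : ChainComplex 𝒜 ℤ) ⟶ Y) p (𝟙 Y) := by
    constructor; simp
  constructor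
  · intro n
    exact ⟨⟨⟨sq.lift.f n, congrArg (fun q => HomologicalComplex.Hom.f q n) sq.fac_right⟩⟩⟩
  · constructor
    intro A B f i hi
    haveI := h i hi
    have sq2 : CommSq (f ≫ kernel.ι p) i p 0 := by
      constructor
      simp [kernel.condition]
    refine ⟨kernel.lift p sq2.lift sq2.fac_right, ?_⟩
    rw [← cancel_mono (kernel.ι p)]
    rw [Category.assoc, kernel.lift_ι, sq2.fac_left]
end

section
/- Let A be an abelian category and K the class of epimorphisms in Ch(A) with injective kernel (as object of Ch(A)). If A has enough injectives, then a map p : X → Y belongs to K if and only if p has the right lifting property with respect to all monomorphisms in Ch(A). -/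
open CategoryTheory CategoryTheory.Limits

/-- In any abelian category, a morphism is an epimorphism with injective kernel iff it has
the right lifting property with respect to all monomorphisms. -/
theorem epiWithInjectiveKernel_iff_rlp_mono_aux {C : Type*} [Category C] [Abelian C]
    {X Y : C} (p : X ⟶ Y) :
    (Epi p ∧ Injective (kernel p)) ↔
      ∀ ⦃A B : C⦄ (i : A ⟶ B), Mono i → HasLiftingProperty i p := by
  constructor
  · rintro ⟨hp, hK⟩ A B i hi
    let S := ShortComplex.mk (kernel.ι p) p (by simp)
    have hS : S.Exact := S.exact_of_f_is_kernel (kernelIsKernel p)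
    let σ : S.Splitting := ShortComplex.Splitting.ofExactOfRetraction S hS
      (Injective.factorThru (𝟙 _) (kernel.ι p)) (Injective.comp_factorThru _ _) hp
    constructor
    intro f g sq
    refine ⟨⟨{ l := Injective.factorThru (f ≫ σ.r) i ≫ kernel.ι p + g ≫ σ.s
               fac_left := ?_
               fac_right := ?_ }⟩⟩
    · have h1 : i ≫ Injective.factorThru (f ≫ σ.r) i = f ≫ σ.r :=
        Injective.comp_factorThru _ _
      have h2 := σ.id
      simp only [Preadditive.comp_add, reassoc_of% h1, ← reassoc_of% sq.w]
      calc f ≫ σ.r ≫ kernel.ι p + f ≫ p ≫ σ.s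
          = f ≫ (σ.r ≫ S.f + S.g ≫ σ.s) := by
            simp [S, Preadditive.comp_add]
        _ = f := by rw [h2, Category.comp_id]
    · have h3 : σ.s ≫ p = 𝟙 Y := σ.s_g
      simp [Preadditive.add_comp, Category.assoc, h3]
  · intro h
    constructor
    · -- use lifting against the mono `0 ⟶ Y`
      obtain ⟨Z, hZ⟩ := HasZeroObject.zero (C := C)
      have hmono : Mono (0 : Z ⟶ Y) := by
        constructor
        intro W g h _
        apply hZ.eq_of_tgt
      have := h (0 : Z ⟶ Y) hmono
      have sq : CommSq (0 : Z ⟶ X) (0 : Z ⟶ Y) p (𝟙 Y) := ⟨by simp⟩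
      have : IsSplitEpi p := ⟨⟨⟨sq.lift, sq.fac_right⟩⟩⟩
      infer_instance
    · constructor
      intro A B f i hi
      have := h i hi
      have sq : CommSq (f ≫ kernel.ι p) i p 0 := ⟨by simp⟩
      have hl : sq.lift ≫ p = 0 := sq.fac_right
      refine ⟨kernel.lift p sq.lift hl, ?_⟩
      have : (i ≫ kernel.lift p sq.lift hl) ≫ kernel.ι p = f ≫ kernel.ι p := by
        simp [sq.fac_left]
      exact (cancel_mono (kernel.ι p)).1 this

/-- Let `𝒜` be an abelian category with enough injectives.  A map `p : X ⟶ Y` of unbounded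
chain complexes is an epimorphism with injective kernel (as an object of the category
of complexes) if and only if `p` has the right lifting property with respect to all
monomorphisms of chain complexes. -/
theorem epiWithInjectiveKernel_iff_rlp_mono {𝒜 : Type*} [Category 𝒜] [Abelian 𝒜]
    [EnoughInjectives 𝒜] {X Y : ChainComplex 𝒜 ℤ} (p : X ⟶ Y) :
    (Epi p ∧ Injective (kernel p)) ↔
      ∀ ⦃A B : ChainComplex 𝒜 ℤ⦄ (i : A ⟶ B), Mono i → HasLiftingProperty i p :=
  epiWithInjectiveKernel_iff_rlp_mono_aux p
end
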